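/- arXiv:1712.01834 — 4 statements merged into one kernel-verified Lean document; each statement's English description precedes it below -/
import Mathlib

section
/- Let σ = (t, a_1, ..., a_{ℓ-1}) and τ = (t, b_1, ..., b_{ℓ-1}) be two cycles of length ℓ ≥ 2 in a symmetric group such that a_i ≠ b_j for all i, j in [ℓ-1] (so they intersect exactly in t). Then (σ ∘ τ)^ℓ ∘ (τ ∘ σ)^ℓ = σ². -/
open List Equiv Equiv.Perm

private lemma modlt {x n : ℕ} (h : x < n) : x % n = x := Nat.mod_eq_of_lt h

private lemma modsub {x n : ℕ} (h1 : n ≤ x) (h2 : x < 2 * n) : x % n = x - n := by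
  rw [Nat.mod_eq_sub_mod h1, Nat.mod_eq_of_lt (by omega)]

private lemma aux1 {α : Type*} [DecidableEq α] (m : ℕ) (t : α) (a b : List α)
    (hal : a.length = m + 1) (hbl : b.length = m + 1)
    (hnd : ((t :: a) ++ b).Nodup) :
    (t :: b).formPerm * (t :: a).formPerm = ((t :: a) ++ b).formPerm := by
  obtain ⟨hta, hb, hdisj⟩ := List.nodup_append'.mp hnd
  have htb : (t :: b).Nodup := by
    rw [List.nodup_cons]
    exact ⟨fun h => hdisj (List.mem_cons_self) h, hb⟩
  have hLlen : ((t :: a) ++ b).length = 2 * m + 3 := by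
    simp [hal, hbl]; omega
  have hta' : (t :: a).length = m + 2 := by simp [hal]
  have htb' : (t :: b).length = m + 2 := by simp [hbl]
  have hmemA : ∀ x ∈ a, x ∉ (t :: b) := by
    intro x hx hmem
    rcases List.mem_cons.mp hmem with rfl | hxb
    · exact (List.nodup_cons.mp hta).1 hx
    · exact hdisj (List.mem_cons_of_mem t hx) hxb
  have hmemB : ∀ x ∈ b, x ∉ (t :: a) := fun x hx hmem => hdisj hmem hx
  ext x
  by_cases hx : x ∈ (t :: a) ++ b
  · obtain ⟨i, hi, rfl⟩ := List.mem_iff_getElem.mp hx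
    have hi' : i < 2 * m + 3 := hLlen ▸ hi
    rw [Equiv.Perm.mul_apply]
    rw [List.formPerm_apply_getElem _ hnd i hi]
    by_cases h1 : i < m + 2
    · -- the element is in t :: a
      have h1' : i < (t :: a).length := by omega
      rw [List.getElem_append_left h1']
      rw [List.formPerm_apply_getElem _ hta i h1']
      by_cases h2 : i < m + 1
      · -- σ sends it to a[i], which τ fixes
        have e1 : (i + 1) % (t :: a).length = i + 1 := by
          rw [hta']; exact modlt (by omega)
        have e2 : (i + 1) % ((t :: a) ++ b).length = i + 1 := by
          rw [hLlen]; exact modlt (by omega)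
        simp only [e1, e2]
        have h3 : i + 1 < (t :: a).length := by omega
        rw [List.getElem_append_left h3]
        apply List.formPerm_apply_of_notMem
        apply hmemA
        have : (t :: a)[i+1] = a[i]'(by omega) := by
          simp
        rw [this]
        exact List.getElem_mem _
      · -- i = m + 1 : σ sends it to t, τ sends t to b[0] = L[m+2]
        have hieq : i = m + 1 := by omega
        subst hieq
        have e1 : (m + 1 + 1) % (t :: a).length = 0 := by
          rw [hta', show m + 1 + 1 = m + 2 from rfl, Nat.mod_self]
        have e2 : (m + 1 + 1) % ((t :: a) ++ b).length = m + 2 := by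
          rw [hLlen]; exact modlt (by omega)
        simp only [e1, e2]
        have h0 : (0:ℕ) < (t :: b).length := by simp
        have : (t :: a)[0]'(by simp) = (t :: b)[0]'h0 := by simp
        rw [this, List.formPerm_apply_getElem _ htb 0 h0]
        have e3 : (0 + 1) % (t :: b).length = 1 := by
          rw [htb']; exact modlt (by omega)
        simp only [e3]
        have h4 : (t :: a).length ≤ m + 2 := by omega
        rw [List.getElem_append_right h4]
        simp [hta']
    · -- the element is in b: σ fixes it, τ advances it
      have h1' : (t :: a).length ≤ i := by omega
      rw [List.getElem_append_right h1']
      have hib : i - (t :: a).length < b.length := by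
        rw [hta', hbl]; omega
      rw [List.formPerm_apply_of_notMem (hmemB _ (List.getElem_mem _))]
      have hj : i - (t :: a).length + 1 < (t :: b).length := by
        rw [htb', hta']; omega
      have hbtb : b[i - (t :: a).length]'hib = (t :: b)[i - (t :: a).length + 1]'hj := by
        simp
      rw [hbtb, List.formPerm_apply_getElem _ htb _ hj]
      by_cases h2 : i < 2 * m + 2
      · have e1 : (i - (t :: a).length + 1 + 1) % (t :: b).length
            = i - (t :: a).length + 2 := by
          rw [htb', hta']; exact modlt (by omega)
        have e2 : (i + 1) % ((t :: a) ++ b).length = i + 1 := by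
          rw [hLlen]; exact modlt (by omega)
        simp only [e1, e2]
        have h3 : (t :: a).length ≤ i + 1 := by omega
        rw [List.getElem_append_right h3]
        simp only [hta', List.getElem_cons_succ]
        simp only [show i - (m + 2) + 1 = i + 1 - (m + 2) from by omega]
      · have hieq : i = 2 * m + 2 := by omega
        subst hieq
        have e1 : (2 * m + 2 - (t :: a).length + 1 + 1) % (t :: b).length = 0 := by
          rw [htb', hta', show 2 * m + 2 - (m + 2) + 1 + 1 = m + 2 from by omega, Nat.mod_self]
        have e2 : (2 * m + 2 + 1) % ((t :: a) ++ b).length = 0 := by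
          rw [hLlen, show 2 * m + 2 + 1 = 2 * m + 3 from rfl, Nat.mod_self]
        simp only [e1, e2]
        have : ((t :: a) ++ b)[0]'(by simp) = t := by simp
        rw [this]; simp
  · have hxa : x ∉ (t :: a) := fun h => hx (List.mem_append_left _ h)
    have hxb : x ∉ (t :: b) := by
      intro h
      rcases List.mem_cons.mp h with rfl | h'
      · exact hx (List.mem_append_left _ (List.mem_cons_self))
      · exact hx (List.mem_append_right _ h')
    rw [Equiv.Perm.mul_apply, List.formPerm_apply_of_notMem hxa,
      List.formPerm_apply_of_notMem hxb, List.formPerm_apply_of_notMem hx]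

private lemma aux2 {α : Type*} [DecidableEq α] (m : ℕ) (t : α) (a b : List α)
    (hal : a.length = m + 1) (hbl : b.length = m + 1)
    (hnd : ((t :: a) ++ b).Nodup) :
    (t :: a).formPerm * ((t :: a) ++ b).formPerm ^ (m + 1) * (t :: a).formPerm
      = ((t :: a) ++ b).formPerm ^ (m + 2) := by
  obtain ⟨hta, hb, hdisj⟩ := List.nodup_append'.mp hnd
  have hLlen : ((t :: a) ++ b).length = 2 * m + 3 := by
    simp [hal, hbl]; omega
  have hta' : (t :: a).length = m + 2 := by simp [hal]
  have hmemB : ∀ x ∈ b, x ∉ (t :: a) := fun x hx hmem => hdisj hmem hx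
  -- helpers for the action of σ on elements of L
  have hσ1 : ∀ i (h : i < m + 1),
      (t :: a).formPerm (((t :: a) ++ b)[i]'(by rw [hLlen]; omega))
        = ((t :: a) ++ b)[i + 1]'(by rw [hLlen]; omega) := by
    intro i h
    have h1 : i < (t :: a).length := by omega
    have h2 : i + 1 < (t :: a).length := by omega
    rw [List.getElem_append_left h1, List.getElem_append_left h2,
      List.formPerm_apply_getElem _ hta i h1]
    simp only [hta', modlt (show i + 1 < m + 2 by omega)]
  have hσ2 : (t :: a).formPerm (((t :: a) ++ b)[m + 1]'(by rw [hLlen]; omega))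
      = ((t :: a) ++ b)[0]'(by rw [hLlen]; omega) := by
    have h1 : m + 1 < (t :: a).length := by omega
    have h2 : 0 < (t :: a).length := by omega
    rw [List.getElem_append_left h1, List.getElem_append_left h2,
      List.formPerm_apply_getElem _ hta (m + 1) h1]
    simp only [hta', show m + 1 + 1 = m + 2 from rfl, Nat.mod_self]
  have hσ3 : ∀ i (h3 : m + 2 ≤ i) (h : i < 2 * m + 3),
      (t :: a).formPerm (((t :: a) ++ b)[i]'(by rw [hLlen]; omega))
        = ((t :: a) ++ b)[i]'(by rw [hLlen]; omega) := by
    intro i h3 h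
    have h1 : (t :: a).length ≤ i := by omega
    rw [List.getElem_append_right h1]
    exact List.formPerm_apply_of_notMem (hmemB _ (List.getElem_mem _))
  have hρ : ∀ k i (h : i < 2 * m + 3),
      (((t :: a) ++ b).formPerm ^ k) (((t :: a) ++ b)[i]'(by rw [hLlen]; omega))
        = ((t :: a) ++ b)[(i + k) % (2 * m + 3)]'(by rw [hLlen]; exact Nat.mod_lt _ (by omega)) := by
    intro k i h
    rw [List.formPerm_pow_apply_getElem _ hnd k i (by rw [hLlen]; omega)]
    simp only [hLlen]
  ext x
  by_cases hx : x ∈ (t :: a) ++ b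
  · obtain ⟨i, hi, rfl⟩ := List.mem_iff_getElem.mp hx
    have hi' : i < 2 * m + 3 := hLlen ▸ hi
    rw [Equiv.Perm.mul_apply, Equiv.Perm.mul_apply, hρ (m + 2) i hi']
    by_cases h1 : i < m + 1
    · rw [hσ1 i h1, hρ (m + 1) (i + 1) (by omega)]
      simp only [modlt (show i + 1 + (m + 1) < 2 * m + 3 by omega),
        modlt (show i + (m + 2) < 2 * m + 3 by omega),
        show i + 1 + (m + 1) = i + (m + 2) from by omega]
      rw [hσ3 (i + (m + 2)) (by omega) (by omega)]
    · by_cases h2 : i < m + 2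
      · have : i = m + 1 := by omega
        subst this
        rw [hσ2, hρ (m + 1) 0 (by omega)]
        simp only [show (0 : ℕ) + (m + 1) = m + 1 from by omega,
          modlt (show m + 1 < 2 * m + 3 by omega)]
        rw [hσ2]
        simp only [show m + 1 + (m + 2) = 2 * m + 3 from by omega, Nat.mod_self]
      · rw [hσ3 i (by omega) hi', hρ (m + 1) i hi']
        simp only [modsub (show 2 * m + 3 ≤ i + (m + 1) by omega) (by omega),
          modsub (show 2 * m + 3 ≤ i + (m + 2) by omega) (by omega),
          show i + (m + 1) - (2 * m + 3) = i - (m + 2) from by omega]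
        rw [hσ1 (i - (m + 2)) (by omega)]
        simp only [show i - (m + 2) + 1 = i + (m + 2) - (2 * m + 3) from by omega]
  · have hxa : x ∉ (t :: a) := fun h => hx (List.mem_append_left _ h)
    have hfix : ((t :: a) ++ b).formPerm x = x := List.formPerm_apply_of_notMem hx
    have hfixp : ∀ k, (((t :: a) ++ b).formPerm ^ k) x = x := by
      intro k
      induction k with
      | zero => rfl
      | succ n ih => rw [pow_succ, Equiv.Perm.mul_apply, hfix, ih]
    rw [Equiv.Perm.mul_apply, Equiv.Perm.mul_apply,
      List.formPerm_apply_of_notMem hxa, hfixp, List.formPerm_apply_of_notMem hxa, hfixp]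

/-- For cycles `σ = (t, a₁, …, a_{ℓ-1})` and `τ = (t, b₁, …, b_{ℓ-1})` of length `ℓ ≥ 2`
intersecting only in `t`, we have `(σ ∘ τ)^ℓ ∘ (τ ∘ σ)^ℓ = σ²`. -/
theorem stmt_2 {α : Type*} [DecidableEq α] [Fintype α]
    (ℓ : ℕ) (hℓ : 2 ≤ ℓ) (t : α) (a b : List α)
    (hal : a.length = ℓ - 1) (hbl : b.length = ℓ - 1)
    (hnd : (t :: (a ++ b)).Nodup) :
    ((t :: a).formPerm * (t :: b).formPerm) ^ ℓ *
      ((t :: b).formPerm * (t :: a).formPerm) ^ ℓ = (t :: a).formPerm ^ 2 := by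
  obtain ⟨m, rfl⟩ : ∃ m, ℓ = m + 2 := ⟨ℓ - 2, by omega⟩
  replace hal : a.length = m + 1 := by omega
  replace hbl : b.length = m + 1 := by omega
  have hnd' : ((t :: a) ++ b).Nodup := by simpa using hnd
  have h1 := aux1 m t a b hal hbl hnd'
  have h2 := aux2 m t a b hal hbl hnd'
  set σ := (t :: a).formPerm with hσd
  set τ := (t :: b).formPerm with hτd
  set ρ := ((t :: a) ++ b).formPerm with hρd
  have hLlen : ((t :: a) ++ b).length = 2 * m + 3 := by
    simp [hal, hbl]; omega
  have hord : ρ ^ (2 * m + 3) = 1 := by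
    have := List.formPerm_pow_length_eq_one_of_nodup _ hnd'
    rwa [hLlen] at this
  have hst : σ * τ = σ * ρ * σ⁻¹ := by
    rw [← h1]; group
  have hkey : σ⁻¹ * ρ ^ (m + 2) = ρ ^ (m + 1) * σ := by
    rw [← h2]; group
  calc (σ * τ) ^ (m + 2) * (τ * σ) ^ (m + 2)
      = (σ * ρ * σ⁻¹) ^ (m + 2) * ρ ^ (m + 2) := by rw [hst, h1]
    _ = σ * ρ ^ (m + 2) * (σ⁻¹ * ρ ^ (m + 2)) := by
        rw [conj_pow]; group
    _ = σ * ρ ^ (m + 2) * (ρ ^ (m + 1) * σ) := by rw [hkey]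
    _ = σ * ρ ^ (2 * m + 3) * σ := by
        rw [show 2 * m + 3 = (m + 2) + (m + 1) from by omega, pow_add]; group
    _ = σ ^ 2 := by rw [hord, sq]; group
end

section
/- Let σ = (t, a_1, ..., a_{ℓ-1}) and τ = (t, b_1, ..., b_{ℓ-1}) be two cycles of length ℓ ≥ 2 intersecting only in t. Then both τ ∘ σ and σ ∘ τ are cycles of length 2ℓ - 1; moreover (τ ∘ σ)^ℓ = (t, b_1, a_1, b_2, a_2, ..., b_{ℓ-1}, a_{ℓ-1}) and (σ ∘ τ)^ℓ = (t, a_1, b_1, a_2, b_2, ..., a_{ℓ-1}, b_{ℓ-1}). -/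
open List Equiv Equiv.Perm

namespace Stmt4Aux

variable {α : Type*} [DecidableEq α]

theorem flat_length (a b : List α) (h : b.length = a.length) :
    (List.zipWith (fun x y => [x, y]) a b).flatten.length = 2 * a.length := by
  induction a generalizing b with
  | nil => simp
  | cons x a ih =>
    cases b with
    | nil => simp at h
    | cons y b =>
      simp only [List.length_cons] at h
      simp only [List.zipWith_cons_cons, List.flatten_cons, List.length_append,
        List.length_cons, List.length_nil, List.cons_append, List.nil_append]
      rw [ih b (by omega)]; omega

theorem flat_getElem? (a b : List α) (h : b.length = a.length) (k : ℕ) :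
    (List.zipWith (fun x y => [x, y]) a b).flatten[2*k]? = a[k]? ∧
    (List.zipWith (fun x y => [x, y]) a b).flatten[2*k+1]? = b[k]? := by
  induction a generalizing b k with
  | nil => cases b <;> simp_all
  | cons x a ih =>
    cases b with
    | nil => simp at h
    | cons y b =>
      cases k with
      | zero => simp
      | succ k =>
        have H := ih b (by simpa using h) k
        simp only [List.zipWith_cons_cons, List.flatten_cons, List.cons_append,
          List.nil_append]
        rw [show 2*(k+1) = (2*k)+1+1 by ring]
        simpa [List.getElem?_cons_succ] using H

/-- The interleaved list read via `getElem?` equals the concatenated list at index `ℓ*m % (2ℓ-1)`. -/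
theorem key_getElem? (ℓ : ℕ) (hℓ : 2 ≤ ℓ) (t : α) (a b : List α)
    (hal : a.length = ℓ - 1) (hbl : b.length = ℓ - 1) (m : ℕ) (hm : m < 2*ℓ-1) :
    (t :: (List.zipWith (fun x y => [x, y]) b a).flatten)[m]? =
      (t :: (a ++ b))[(ℓ * m) % (2*ℓ-1)]? := by
  obtain ⟨p, rfl⟩ : ∃ p, ℓ = p + 2 := ⟨ℓ - 2, by omega⟩
  have hn : 2*(p+2)-1 = 2*p+3 := by omega
  rw [hn] at hm ⊢
  rcases Nat.even_or_odd m with ⟨k, hk⟩ | ⟨k, hk⟩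
  · -- m = k + k
    cases k with
    | zero => subst hk; simp
    | succ k =>
      have hmk : m = 2*k+1+1 := by omega
      subst hmk
      have hidx : ((p+2) * (2*k+1+1)) % (2*p+3) = k+1 := by
        rw [show (p+2) * (2*k+1+1) = (k+1) + (k+1)*(2*p+3) by ring,
          Nat.add_mul_mod_self_right, Nat.mod_eq_of_lt (by omega)]
      rw [hidx]
      have hk1 : k < a.length := by omega
      have H := (flat_getElem? b a (by omega) k).2
      simp only [List.getElem?_cons_succ]
      rw [H, List.getElem?_append_left (by omega)]
  · -- m = 2k+1
    subst hk
    have hidx : ((p+2) * (2*k+1)) % (2*p+3) = p+2+k := by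
      rw [show (p+2) * (2*k+1) = (p+2+k) + k*(2*p+3) by ring,
        Nat.add_mul_mod_self_right, Nat.mod_eq_of_lt (by omega)]
    rw [hidx]
    have H := (flat_getElem? b a (by omega) k).1
    rw [show p+2+k = (p+1+k)+1 by omega]
    simp only [List.getElem?_cons_succ]
    rw [H, List.getElem?_append_right (by omega)]
    congr 1
    omega

theorem key_len (ℓ : ℕ) (hℓ : 2 ≤ ℓ) (t : α) (a b : List α)
    (hal : a.length = ℓ - 1) (hbl : b.length = ℓ - 1) :
    (t :: (List.zipWith (fun x y => [x, y]) b a).flatten).length = 2*ℓ-1 := by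
  simp only [List.length_cons, flat_length b a (by omega)]
  omega

theorem coprime_key (ℓ : ℕ) (hℓ : 2 ≤ ℓ) : Nat.Coprime ℓ (2*ℓ-1) := by
  obtain ⟨p, rfl⟩ : ∃ p, ℓ = p + 2 := ⟨ℓ - 2, by omega⟩
  rw [show 2*(p+2)-1 = (p+1) + (p+2) by omega, Nat.coprime_add_self_right,
    show p+2 = 1 + (p+1) by omega, Nat.coprime_add_self_left]
  simp [Nat.Coprime]

/-- The interleaved list as getElem of the concatenated list. -/
theorem key_getElem (ℓ : ℕ) (hℓ : 2 ≤ ℓ) (t : α) (a b : List α)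
    (hal : a.length = ℓ - 1) (hbl : b.length = ℓ - 1) (m : ℕ) (hm : m < 2*ℓ-1) :
    (t :: (List.zipWith (fun x y => [x, y]) b a).flatten)[m]'(by
        rw [key_len ℓ hℓ t a b hal hbl]; exact hm) =
      (t :: (a ++ b))[(ℓ * m) % (2*ℓ-1)]'(by
        simp only [List.length_cons, List.length_append, hal, hbl]
        have h2 : ℓ * m % (2*ℓ-1) < 2*ℓ-1 := Nat.mod_lt _ (by omega)
        omega) := by
  have h1 := key_getElem? ℓ hℓ t a b hal hbl m hm
  rw [List.getElem?_eq_getElem (by rw [key_len ℓ hℓ t a b hal hbl]; exact hm),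
    List.getElem?_eq_getElem (by
      simp only [List.length_cons, List.length_append, hal, hbl]
      have h2 : ℓ * m % (2*ℓ-1) < 2*ℓ-1 := Nat.mod_lt _ (by omega)
      omega)] at h1
  exact Option.some.inj h1

theorem key_nodup (ℓ : ℕ) (hℓ : 2 ≤ ℓ) (t : α) (a b : List α)
    (hal : a.length = ℓ - 1) (hbl : b.length = ℓ - 1)
    (hnd : (t :: (a ++ b)).Nodup) :
    (t :: (List.zipWith (fun x y => [x, y]) b a).flatten).Nodup := by
  have hlen : (t :: (List.zipWith (fun x y => [x, y]) b a).flatten).length = 2*ℓ-1 :=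
    key_len ℓ hℓ t a b hal hbl
  have hlen2 : (t :: (a ++ b)).length = 2*ℓ-1 := by
    simp only [List.length_cons, List.length_append, hal, hbl]; omega
  rw [List.nodup_iff_getElem?_ne_getElem?]
  intro i j hij hjlen heq
  rw [hlen] at hjlen
  have hi : i < 2*ℓ-1 := by omega
  rw [key_getElem? ℓ hℓ t a b hal hbl i hi,
    key_getElem? ℓ hℓ t a b hal hbl j hjlen] at heq
  have hu : ℓ * i % (2*ℓ-1) < (t :: (a ++ b)).length := by
    rw [hlen2]; exact Nat.mod_lt _ (by omega)
  have hv : ℓ * j % (2*ℓ-1) < (t :: (a ++ b)).length := by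
    rw [hlen2]; exact Nat.mod_lt _ (by omega)
  have hne := List.nodup_iff_getElem?_ne_getElem?.mp hnd
  have huv : ℓ * i % (2*ℓ-1) = ℓ * j % (2*ℓ-1) := by
    rcases lt_trichotomy (ℓ * i % (2*ℓ-1)) (ℓ * j % (2*ℓ-1)) with h | h | h
    · exact absurd heq (hne _ _ h hv)
    · exact h
    · exact absurd heq.symm (hne _ _ h hu)
  have hmeq : i ≡ j [MOD 2*ℓ-1] :=
    Nat.ModEq.cancel_left_of_coprime (by
      have hc := coprime_key ℓ hℓ
      rwa [Nat.coprime_comm] at hc) huv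
  have hij2 : i % (2*ℓ-1) = j % (2*ℓ-1) := hmeq
  rw [Nat.mod_eq_of_lt hi, Nat.mod_eq_of_lt hjlen] at hij2
  omega

theorem key_mem (ℓ : ℕ) (hℓ : 2 ≤ ℓ) (t : α) (a b : List α)
    (hal : a.length = ℓ - 1) (hbl : b.length = ℓ - 1)
    (hnd : (t :: (a ++ b)).Nodup) (x : α) :
    x ∈ (t :: (List.zipWith (fun x y => [x, y]) b a).flatten) ↔ x ∈ t :: (a ++ b) := by
  set L := t :: (List.zipWith (fun x y => [x, y]) b a).flatten with hL
  have hlen : L.length = 2*ℓ-1 := key_len ℓ hℓ t a b hal hbl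
  have hlen2 : (t :: (a ++ b)).length = 2*ℓ-1 := by
    simp only [List.length_cons, List.length_append, hal, hbl]; omega
  have hndL : L.Nodup := key_nodup ℓ hℓ t a b hal hbl hnd
  have hsub : ∀ y ∈ L, y ∈ t :: (a ++ b) := by
    intro y hy
    obtain ⟨m, hm, rfl⟩ := List.mem_iff_getElem.mp hy
    rw [key_getElem ℓ hℓ t a b hal hbl m (hlen ▸ hm)]
    exact List.getElem_mem _
  have hts : L.toFinset ⊆ (t :: (a ++ b)).toFinset := by
    intro y hy
    rw [List.mem_toFinset] at *
    exact hsub y hy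
  have hcard : (t :: (a ++ b)).toFinset.card ≤ L.toFinset.card := by
    rw [List.toFinset_card_of_nodup hndL, List.toFinset_card_of_nodup hnd, hlen, hlen2]
  have := Finset.eq_of_subset_of_card_le hts hcard
  constructor
  · exact hsub x
  · intro hx
    have : x ∈ L.toFinset := by
      rw [this, List.mem_toFinset]; exact hx
    rwa [List.mem_toFinset] at this

/-- `(t::(a++b)).formPerm ^ ℓ` equals the formPerm of the interleaved list. -/
theorem key_pow (ℓ : ℕ) (hℓ : 2 ≤ ℓ) (t : α) (a b : List α)
    (hal : a.length = ℓ - 1) (hbl : b.length = ℓ - 1)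
    (hnd : (t :: (a ++ b)).Nodup) :
    (t :: (a ++ b)).formPerm ^ ℓ
      = (t :: (List.zipWith (fun x y => [x, y]) b a).flatten).formPerm := by
  have hlen : (t :: (List.zipWith (fun x y => [x, y]) b a).flatten).length = 2*ℓ-1 :=
    key_len ℓ hℓ t a b hal hbl
  have hlen2 : (t :: (a ++ b)).length = 2*ℓ-1 := by
    simp only [List.length_cons, List.length_append, hal, hbl]; omega
  have hndL : (t :: (List.zipWith (fun x y => [x, y]) b a).flatten).Nodup :=
    key_nodup ℓ hℓ t a b hal hbl hnd
  ext x
  by_cases hx : x ∈ t :: (a ++ b)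
  · rw [← key_mem ℓ hℓ t a b hal hbl hnd x] at hx
    obtain ⟨m, hm, rfl⟩ := List.mem_iff_getElem.mp hx
    have hm' : m < 2*ℓ-1 := hlen ▸ hm
    rw [List.formPerm_apply_getElem _ hndL m hm]
    rw [key_getElem ℓ hℓ t a b hal hbl m hm']
    rw [List.formPerm_pow_apply_getElem _ hnd ℓ _ (by
      rw [hlen2]; exact Nat.mod_lt _ (by omega))]
    have hm1 : (m+1) % (t :: (List.zipWith (fun x y => [x, y]) b a).flatten).length
        < 2*ℓ-1 := by
      rw [hlen]; exact Nat.mod_lt _ (by omega)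
    rw [key_getElem ℓ hℓ t a b hal hbl _ hm1]
    have harith : (ℓ * m % (2*ℓ-1) + ℓ) % (t :: (a ++ b)).length
        = ℓ * ((m+1) % (t :: (List.zipWith (fun x y => [x, y]) b a).flatten).length)
          % (2*ℓ-1) := by
      rw [hlen2, hlen]
      calc (ℓ * m % (2*ℓ-1) + ℓ) % (2*ℓ-1)
          = (ℓ * m + ℓ) % (2*ℓ-1) := by rw [Nat.mod_add_mod]
        _ = (ℓ * (m+1)) % (2*ℓ-1) := by ring_nf
        _ = (ℓ % (2*ℓ-1)) * ((m+1) % (2*ℓ-1)) % (2*ℓ-1) := Nat.mul_mod _ _ _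
        _ = ℓ * ((m+1) % (2*ℓ-1)) % (2*ℓ-1) := by rw [Nat.mod_mul_mod]
    simp only [harith]
  · have hx' : x ∉ t :: (List.zipWith (fun x y => [x, y]) b a).flatten := by
      rw [key_mem ℓ hℓ t a b hal hbl hnd x]; exact hx
    rw [List.formPerm_apply_of_notMem hx',
      Equiv.Perm.pow_apply_eq_self_of_apply_eq_self (List.formPerm_apply_of_notMem hx)]

theorem key_mul (ℓ : ℕ) (hℓ : 2 ≤ ℓ) (t : α) (a b : List α)
    (hal : a.length = ℓ - 1) (hbl : b.length = ℓ - 1)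
    (hnd : (t :: (a ++ b)).Nodup) :
    (t :: b).formPerm * (t :: a).formPerm = (t :: (a ++ b)).formPerm := by
  obtain ⟨ht, hab⟩ := List.nodup_cons.mp hnd
  rw [List.mem_append] at ht
  push_neg at ht
  obtain ⟨hta, htb⟩ := ht
  rw [List.nodup_append] at hab
  obtain ⟨hna, hnb, hdisj⟩ := hab
  have hand : (t :: a).Nodup := List.nodup_cons.mpr ⟨hta, hna⟩
  have hbnd : (t :: b).Nodup := List.nodup_cons.mpr ⟨htb, hnb⟩
  have hlen2 : (t :: (a ++ b)).length = 2*ℓ-1 := by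
    simp only [List.length_cons, List.length_append, hal, hbl]; omega
  have hlena : (t :: a).length = ℓ := by simp [hal]; omega
  have hlenb : (t :: b).length = ℓ := by simp [hbl]; omega
  -- elements of a are not in t :: b
  have hnotb : ∀ j (hj : j < a.length), a[j] ∉ t :: b := by
    intro j hj
    simp only [List.mem_cons]
    push_neg
    exact ⟨fun h => hta (h ▸ List.getElem_mem hj), fun hb => hdisj _ (List.getElem_mem hj) _ hb rfl⟩
  have hnota : ∀ j (hj : j < b.length), b[j] ∉ t :: a := by
    intro j hj
    simp only [List.mem_cons]
    push_neg
    refine ⟨fun h => htb (h ▸ List.getElem_mem hj), fun hmem => ?_⟩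
    exact hdisj _ hmem _ (List.getElem_mem hj) rfl
  ext x
  by_cases hx : x ∈ t :: (a ++ b)
  · obtain ⟨i, hi, rfl⟩ := List.mem_iff_getElem.mp hx
    have hi' : i < 2*ℓ-1 := hlen2 ▸ hi
    rw [Equiv.Perm.mul_apply, List.formPerm_apply_getElem _ hnd i hi]
    simp only [hlen2]
    by_cases h0 : i = 0
    · subst h0
      simp only [show (0+1) % (2*ℓ-1) = 1 from Nat.mod_eq_of_lt (by omega)]
      have e0 : (t :: (a ++ b))[0]'hi = t := rfl
      rw [e0]
      have s1 : (t :: a).formPerm t = a[0]'(by omega) := by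
        have h2 := List.formPerm_apply_getElem (t :: a) hand 0 (by simp)
        simp only [hlena, show (0+1) % ℓ = 1 from Nat.mod_eq_of_lt (by omega),
          List.getElem_cons_succ, List.getElem_cons_zero] at h2
        exact h2
      rw [s1, List.formPerm_apply_of_notMem (hnotb 0 (by omega))]
      rw [List.getElem_cons_succ, List.getElem_append_left (by omega)]
    · obtain ⟨j, rfl⟩ : ∃ j, i = j + 1 := ⟨i - 1, by omega⟩
      by_cases hA : j < a.length
      · -- x = a[j]
        have ex : (t :: (a ++ b))[j+1]'hi = a[j]'hA := by
          rw [List.getElem_cons_succ, List.getElem_append_left hA]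
        rw [ex]
        have s1 := List.formPerm_apply_getElem (t :: a) hand (j+1)
          (by rw [hlena]; omega)
        simp only [hlena, List.getElem_cons_succ] at s1
        by_cases hlast : j + 1 = ℓ - 1
        · -- last element of a: σ sends it to t, τ sends t to b[0]
          have hmod : (j + 1 + 1) % ℓ = 0 := by
            rw [show j + 1 + 1 = ℓ by omega, Nat.mod_self]
          simp only [hmod, List.getElem_cons_zero] at s1
          rw [s1]
          have s2 : (t :: b).formPerm t = b[0]'(by omega) := by
            have h2 := List.formPerm_apply_getElem (t :: b) hbnd 0 (by simp)
            simp only [hlenb, show (0+1) % ℓ = 1 from Nat.mod_eq_of_lt (by omega),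
              List.getElem_cons_succ, List.getElem_cons_zero] at h2
            exact h2
          rw [s2]
          simp only [show (j + 1 + 1) % (2*ℓ-1) = ℓ from by
            rw [show j + 1 + 1 = ℓ by omega]; exact Nat.mod_eq_of_lt (by omega)]
          obtain ⟨k, rfl⟩ : ∃ k, ℓ = k + 1 := ⟨ℓ - 1, by omega⟩
          rw [List.getElem_cons_succ, List.getElem_append_right (by omega)]
          congr 1
          omega
        · -- middle of a
          have hmod : (j + 1 + 1) % ℓ = j + 2 := Nat.mod_eq_of_lt (by omega)
          simp only [hmod, List.getElem_cons_succ] at s1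
          rw [s1, List.formPerm_apply_of_notMem (hnotb (j+1) (by omega))]
          simp only [show (j + 1 + 1) % (2*ℓ-1) = j + 2 from Nat.mod_eq_of_lt (by omega)]
          rw [List.getElem_cons_succ, List.getElem_append_left (by omega)]
      · -- x = b[j - a.length]
        obtain ⟨k, hk⟩ : ∃ k, j = a.length + k := ⟨j - a.length, by omega⟩
        subst hk
        have hkb : k < b.length := by omega
        have ex : (t :: (a ++ b))[a.length + k + 1]'hi = b[k]'hkb := by
          rw [List.getElem_cons_succ, List.getElem_append_right (by omega)]
          congr 1
          omega
        rw [ex, List.formPerm_apply_of_notMem (hnota k hkb)]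
        have s1 := List.formPerm_apply_getElem (t :: b) hbnd (k+1)
          (by rw [hlenb]; omega)
        simp only [hlenb, List.getElem_cons_succ] at s1
        by_cases hlast : k + 1 = ℓ - 1
        · have hmod : (k + 1 + 1) % ℓ = 0 := by
            rw [show k + 1 + 1 = ℓ by omega, Nat.mod_self]
          simp only [hmod, List.getElem_cons_zero] at s1
          rw [s1]
          simp only [show (a.length + k + 1 + 1) % (2*ℓ-1) = 0 from by
            rw [show a.length + k + 1 + 1 = 2*ℓ-1 by omega, Nat.mod_self]]
          rfl
        · have hmod : (k + 1 + 1) % ℓ = k + 2 := Nat.mod_eq_of_lt (by omega)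
          simp only [hmod, List.getElem_cons_succ] at s1
          rw [s1]
          simp only [show (a.length + k + 1 + 1) % (2*ℓ-1) = a.length + k + 2 from
            Nat.mod_eq_of_lt (by omega)]
          rw [List.getElem_cons_succ, List.getElem_append_right (by omega)]
          congr 1
          omega
  · have hxa : x ∉ t :: a := by
      intro h
      apply hx
      rcases List.mem_cons.mp h with h | h
      · exact List.mem_cons.mpr (Or.inl h)
      · exact List.mem_cons.mpr (Or.inr (List.mem_append.mpr (Or.inl h)))
    have hxb : x ∉ t :: b := by
      intro h
      apply hx
      rcases List.mem_cons.mp h with h | h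
      · exact List.mem_cons.mpr (Or.inl h)
      · exact List.mem_cons.mpr (Or.inr (List.mem_append.mpr (Or.inr h)))
    rw [Equiv.Perm.mul_apply, List.formPerm_apply_of_notMem hxa,
      List.formPerm_apply_of_notMem hxb, List.formPerm_apply_of_notMem hx]

end Stmt4Aux

/-- For cycles `σ = (t, a₁, …, a_{ℓ-1})` and `τ = (t, b₁, …, b_{ℓ-1})` of length `ℓ ≥ 2`
intersecting only in `t`: both `τ ∘ σ` and `σ ∘ τ` are cycles of length `2ℓ - 1`, and
`(τ ∘ σ)^ℓ = (t, b₁, a₁, b₂, a₂, …, b_{ℓ-1}, a_{ℓ-1})`,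
`(σ ∘ τ)^ℓ = (t, a₁, b₁, a₂, b₂, …, a_{ℓ-1}, b_{ℓ-1})`. -/
theorem stmt_4 {α : Type*} [DecidableEq α] [Fintype α]
    (ℓ : ℕ) (hℓ : 2 ≤ ℓ) (t : α) (a b : List α)
    (hal : a.length = ℓ - 1) (hbl : b.length = ℓ - 1)
    (hnd : (t :: (a ++ b)).Nodup) :
    (((t :: b).formPerm * (t :: a).formPerm).IsCycle ∧
      ((t :: b).formPerm * (t :: a).formPerm).support.card = 2 * ℓ - 1) ∧
    (((t :: a).formPerm * (t :: b).formPerm).IsCycle ∧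
      ((t :: a).formPerm * (t :: b).formPerm).support.card = 2 * ℓ - 1) ∧
    ((t :: b).formPerm * (t :: a).formPerm) ^ ℓ
      = (t :: (List.zipWith (fun x y => [x, y]) b a).flatten).formPerm ∧
    ((t :: a).formPerm * (t :: b).formPerm) ^ ℓ
      = (t :: (List.zipWith (fun x y => [x, y]) a b).flatten).formPerm := by
  have hnd2 : (t :: (b ++ a)).Nodup := ((List.perm_append_comm).cons t).nodup hnd
  have m1 := Stmt4Aux.key_mul ℓ hℓ t a b hal hbl hnd
  have m2 := Stmt4Aux.key_mul ℓ hℓ t b a hbl hal hnd2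
  have hL1 : (t :: (a ++ b)).length = 2 * ℓ - 1 := by
    simp only [List.length_cons, List.length_append, hal, hbl]; omega
  have hL2 : (t :: (b ++ a)).length = 2 * ℓ - 1 := by
    simp only [List.length_cons, List.length_append, hal, hbl]; omega
  have hne1 : ∀ x : α, t :: (a ++ b) ≠ [x] := by
    intro x hx
    have := congrArg List.length hx
    rw [hL1] at this
    simp at this
    omega
  have hne2 : ∀ x : α, t :: (b ++ a) ≠ [x] := by
    intro x hx
    have := congrArg List.length hx
    rw [hL2] at this
    simp at this
    omega
  refine ⟨⟨?_, ?_⟩, ⟨?_, ?_⟩, ?_, ?_⟩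
  · rw [m1]; exact List.isCycle_formPerm hnd (by omega)
  · rw [m1, List.support_formPerm_of_nodup _ hnd hne1,
      List.toFinset_card_of_nodup hnd, hL1]
  · rw [m2]; exact List.isCycle_formPerm hnd2 (by omega)
  · rw [m2, List.support_formPerm_of_nodup _ hnd2 hne2,
      List.toFinset_card_of_nodup hnd2, hL2]
  · rw [m1]; exact Stmt4Aux.key_pow ℓ hℓ t a b hal hbl hnd
  · rw [m2]; exact Stmt4Aux.key_pow ℓ hℓ t b a hbl hal hnd2
end

section
/- For m, n ∈ ℕ with m ≥ 1 and for each i ∈ [n], define the permutation α_i of (ℤ/mℤ)^n by: α_i(x) = x with coordinate i incremented by 1 (mod m) if x_1 = x_2 = ... = x_{i-1} = 0, and α_i(x) = x otherwise. Then the composition α_n ∘ α_{n-1} ∘ ··· ∘ α_1 is a single cycle of length m^n on (ℤ/mℤ)^n. -/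
/-- Division chain: all base-`m` digits below `j` of `k` are `m-1` iff `m^j ∣ k+1`. -/
private lemma digits_carry (m : ℕ) (hm : 1 ≤ m) (j k : ℕ) :
    (∀ i < j, m ∣ k / m ^ i + 1) ↔ m ^ j ∣ k + 1 := by
  induction j with
  | zero => simp
  | succ j ih =>
    constructor
    · intro h
      have h1 : m ^ j ∣ k + 1 := ih.1 fun i hi => h i (by omega)
      obtain ⟨q, hq⟩ := h1
      have hq1 : 1 ≤ q := by nlinarith [pow_pos (by omega : 0 < m) j]
      obtain ⟨r, rfl⟩ : ∃ r, q = r + 1 := ⟨q - 1, by omega⟩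
      have hmj : 0 < m ^ j := pow_pos (by omega) j
      have key1 : m ^ j * (r + 1) = m ^ j * r + m ^ j := Nat.mul_succ _ _
      have hk : k = m ^ j * r + (m ^ j - 1) := by omega
      have hdiv : k / m ^ j = r := by
        rw [hk, Nat.mul_add_div hmj, Nat.div_eq_of_lt (by omega), Nat.add_zero]
      have h2 := h j (by omega)
      rw [hdiv] at h2
      rw [hq, pow_succ]
      exact Nat.mul_dvd_mul dvd_rfl h2
    · intro h i hi
      have h1 : m ^ (i + 1) ∣ k + 1 := dvd_trans (pow_dvd_pow m (by omega)) h
      obtain ⟨q, hq⟩ := h1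
      have hq1 : 1 ≤ q := by nlinarith [pow_pos (by omega : 0 < m) (i + 1)]
      obtain ⟨r, rfl⟩ : ∃ r, q = r + 1 := ⟨q - 1, by omega⟩
      have hmi : 0 < m ^ i := pow_pos (by omega) i
      have key1 : m ^ i * (m * r + m - 1) + m ^ i = m ^ i * (m * r + m) := by
        rw [← Nat.mul_succ]; congr 1; omega
      have key2 : m ^ (i + 1) * (r + 1) = m ^ i * (m * r + m) := by rw [pow_succ]; ring
      have hk : k = m ^ i * (m * r + m - 1) + (m ^ i - 1) := by omega
      have hdiv : k / m ^ i = m * r + m - 1 := by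
        rw [hk, Nat.mul_add_div hmi, Nat.div_eq_of_lt (by omega), Nat.add_zero]
      have h3 : m * (r + 1) = m * r + m := by ring
      have : k / m ^ i + 1 = m * (r + 1) := by rw [hdiv]; omega
      rw [this]
      exact dvd_mul_right m (r + 1)

/-- For `m ≥ 1`, the composition `α_n ∘ ⋯ ∘ α_1` of the permutations `α_i` of `(ℤ/mℤ)^n`
(where `α_i` increments coordinate `i` mod `m` when all earlier coordinates are `0`)
is a single cycle of length `m^n`, i.e. it acts transitively on `(ℤ/mℤ)^n`. -/
theorem stmt_5 (m n : ℕ) (hm : 1 ≤ m)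
    (α : Fin n → Equiv.Perm (Fin n → ZMod m))
    (hα : ∀ (i : Fin n) (x : Fin n → ZMod m),
      α i x = if ∀ j, j < i → x j = 0 then Function.update x i (x i + 1) else x) :
    ∀ x y : Fin n → ZMod m, ∃ k : ℕ, (((List.ofFn α).reverse.prod) ^ k) x = y := by
  haveI : NeZero m := ⟨by omega⟩
  set f : Equiv.Perm (Fin n → ZMod m) := (List.ofFn α).reverse.prod with hf
  -- closed form for partial products
  have key : ∀ t, t ≤ n → ∀ (x : Fin n → ZMod m) (j : Fin n),
      (((List.ofFn α).take t).reverse.prod x) j =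
        if (j : ℕ) < t ∧ ∀ i : Fin n, i < j → x i + 1 = 0 then x j + 1 else x j := by
    intro t ht
    induction t with
    | zero => intro x j; simp
    | succ t ih =>
      intro x j
      have htn : t < n := by omega
      have hlen : t < (List.ofFn α).length := by simpa using htn
      have hsplit : (List.ofFn α).take (t + 1) = ((List.ofFn α).take t).concat (α ⟨t, htn⟩) := by
        rw [← List.take_concat_get hlen, List.getElem_ofFn]
      rw [hsplit, List.concat_eq_append, List.reverse_append, List.reverse_singleton,
        List.singleton_append, List.prod_cons, Equiv.Perm.mul_apply]
      set y := ((List.ofFn α).take t).reverse.prod x with hy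
      have ihy : ∀ j : Fin n, y j =
          if (j : ℕ) < t ∧ ∀ i : Fin n, i < j → x i + 1 = 0 then x j + 1 else x j :=
        fun j => ih (by omega) x j
      rw [hα]
      by_cases hc : ∀ i : Fin n, i < (⟨t, htn⟩ : Fin n) → y i = 0
      · -- all earlier coordinates of y are zero; deduce x i + 1 = 0 for i < t
        have hx0 : ∀ v : ℕ, ∀ hv : v < n, v < t → x ⟨v, hv⟩ + 1 = 0 := by
          intro v
          induction v using Nat.strong_induction_on with
          | _ v IH =>
            intro hv hvt
            have hyi := hc ⟨v, hv⟩ (Fin.mk_lt_mk.2 hvt)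
            rw [ihy ⟨v, hv⟩, if_pos ⟨hvt, fun i' hi' => by
              have hlt : (i' : ℕ) < v := Fin.lt_def.mp hi'
              simpa using IH i' hlt i'.isLt (by omega)⟩] at hyi
            exact hyi
        have hx0' : ∀ i : Fin n, (i : ℕ) < t → x i + 1 = 0 := fun i hi => by
          simpa using hx0 i i.isLt hi
        rw [if_pos hc]
        rcases lt_trichotomy (j : ℕ) t with hjt | hjt | hjt
        · have hne : j ≠ (⟨t, htn⟩ : Fin n) := by
            intro h; rw [h] at hjt; simp at hjt
          rw [Function.update_of_ne hne, ihy j,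
            if_pos ⟨hjt, fun i hi => hx0' i (by have := Fin.lt_def.mp hi; omega)⟩,
            if_pos ⟨by omega, fun i hi => hx0' i (by have := Fin.lt_def.mp hi; omega)⟩]
        · have hj : j = (⟨t, htn⟩ : Fin n) := by apply Fin.ext; simpa using hjt
          subst hj
          rw [Function.update_self, ihy, if_neg (by simp), if_pos ⟨by omega, fun i hi =>
            hx0' i (by simpa using Fin.lt_def.mp hi)⟩]
        · have hne : j ≠ (⟨t, htn⟩ : Fin n) := by
            intro h; rw [h] at hjt; simp at hjt
          rw [Function.update_of_ne hne, ihy j, if_neg (by omega),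
            if_neg (by rintro ⟨h1, -⟩; omega)]
      · rw [if_neg hc, ihy j]
        push_neg at hc
        obtain ⟨i0, hi0t, hi0⟩ := hc
        have hi0t' : (i0 : ℕ) < t := Fin.lt_def.mp hi0t
        have hbad : ¬ ∀ i : Fin n, (i : ℕ) < t → x i + 1 = 0 := by
          intro hall
          apply hi0
          rw [ihy i0, if_pos ⟨hi0t', fun i hi => hall i (by have := Fin.lt_def.mp hi; omega)⟩]
          exact hall i0 hi0t'
        by_cases hcj : ((j : ℕ) < t ∧ ∀ i : Fin n, i < j → x i + 1 = 0)
        · rw [if_pos hcj, if_pos ⟨by omega, hcj.2⟩]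
        · rw [if_neg hcj, if_neg]
          rintro ⟨hj1, hj2⟩
          rcases Nat.lt_or_ge (j : ℕ) t with h | h
          · exact hcj ⟨h, hj2⟩
          · exact hbad fun i hi => hj2 i (Fin.lt_def.mpr (by omega))
  have hfx : ∀ (x : Fin n → ZMod m) (j : Fin n),
      f x j = if ∀ i : Fin n, i < j → x i + 1 = 0 then x j + 1 else x j := by
    intro x j
    have h1 := key n le_rfl x j
    rw [List.take_of_length_le (by simp)] at h1
    rw [hf, h1]
    have : (j : ℕ) < n := j.isLt
    simp [this]
  -- the digit function
  set g : ℕ → (Fin n → ZMod m) := fun k i => ((k / m ^ (i : ℕ) : ℕ) : ZMod m) with hg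
  have hstep : ∀ k, f (g k) = g (k + 1) := by
    intro k
    funext j
    rw [hfx]
    have hcond : (∀ i : Fin n, i < j → g k i + 1 = 0) ↔ m ^ (j : ℕ) ∣ k + 1 := by
      rw [← digits_carry m hm]
      constructor
      · intro h i hi
        have hin : i < n := lt_trans hi j.isLt
        have h2 : ((k / m ^ i + 1 : ℕ) : ZMod m) = 0 := by
          push_cast
          exact h ⟨i, hin⟩ (Fin.lt_def.mpr hi)
        exact (ZMod.natCast_eq_zero_iff _ m).1 h2
      · intro h i hi
        have h2 := (ZMod.natCast_eq_zero_iff _ m).2 (h (i : ℕ) (Fin.lt_def.mp hi))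
        show ((k / m ^ (i : ℕ) : ℕ) : ZMod m) + 1 = 0
        push_cast at h2
        exact h2
    by_cases hd : m ^ (j : ℕ) ∣ k + 1
    · rw [if_pos (hcond.2 hd)]
      show ((k / m ^ (j : ℕ) : ℕ) : ZMod m) + 1 = (((k + 1) / m ^ (j : ℕ) : ℕ) : ZMod m)
      rw [Nat.succ_div, if_pos hd]
      push_cast
      ring
    · rw [if_neg (fun h => hd (hcond.1 h))]
      show ((k / m ^ (j : ℕ) : ℕ) : ZMod m) = (((k + 1) / m ^ (j : ℕ) : ℕ) : ZMod m)
      rw [Nat.succ_div, if_neg hd]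
      simp
  have hiter : ∀ k, (f ^ k) 0 = g k := by
    intro k
    induction k with
    | zero =>
      funext i
      simp [hg]
    | succ k ih =>
      rw [pow_succ', Equiv.Perm.mul_apply, ih, hstep]
  have hperiod : g (m ^ n) = (0 : Fin n → ZMod m) := by
    funext i
    show ((m ^ n / m ^ (i : ℕ) : ℕ) : ZMod m) = 0
    rw [Nat.pow_div (le_of_lt i.isLt) (by omega)]
    exact (ZMod.natCast_eq_zero_iff _ m).2
      (dvd_pow_self m (by have := i.isLt; omega))
  -- surjectivity of g on Fin (m ^ n)
  have hsurj : ∀ x : Fin n → ZMod m, ∃ a : ℕ, a < m ^ n ∧ g a = x := by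
    have hinj : Function.Injective (fun a : Fin (m ^ n) => g (a : ℕ)) := by
      intro a b hab
      have e : ∀ (c : Fin (m ^ n)) (i : Fin n),
          ((finFunctionFinEquiv.symm c) i : ℕ) = (c : ℕ) / m ^ (i : ℕ) % m := fun c i => rfl
      have : finFunctionFinEquiv.symm a = finFunctionFinEquiv.symm b := by
        funext i
        apply Fin.ext
        rw [e, e]
        exact (ZMod.natCast_eq_natCast_iff' _ _ m).1 (congrFun hab i)
      exact finFunctionFinEquiv.symm.injective this
    have hcard : Fintype.card (Fin (m ^ n)) = Fintype.card (Fin n → ZMod m) := by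
      simp [ZMod.card]
    have hbij := (Fintype.bijective_iff_injective_and_card _).2 ⟨hinj, hcard⟩
    intro x
    obtain ⟨a, ha⟩ := hbij.2 x
    exact ⟨(a : ℕ), a.isLt, ha⟩
  intro x y
  obtain ⟨a, han, hax⟩ := hsurj x
  obtain ⟨b, hbn, hby⟩ := hsurj y
  refine ⟨b + (m ^ n - a), ?_⟩
  have hx0 : (f ^ a) 0 = x := by rw [hiter]; exact hax
  calc (f ^ (b + (m ^ n - a))) x = (f ^ (b + (m ^ n - a))) ((f ^ a) 0) := by rw [hx0]
    _ = (f ^ (b + (m ^ n - a)) * f ^ a) 0 := rfl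
    _ = (f ^ (b + (m ^ n - a) + a)) 0 := by rw [← pow_add]
    _ = (f ^ (b + m ^ n)) 0 := by congr 2; omega
    _ = (f ^ b) ((f ^ (m ^ n)) 0) := by rw [pow_add]; rfl
    _ = (f ^ b) 0 := by rw [hiter, hperiod]
    _ = y := by rw [hiter]; exact hby
end

section
/- Every invertible n×n matrix A over a field F can be written as a product of at most n² + 4(n-1) elementary matrices, where an elementary matrix either multiplies one row by a nonzero scalar or adds a scalar multiple of one row to a different row. -/
/-- A matrix is elementary if it scales one row by a nonzero scalar (type (a)), or adds a
scalar multiple of one row to a different row (type (b)). -/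
def IsElementary {n : ℕ} {F : Type*} [Field F] (E : Matrix (Fin n) (Fin n) F) : Prop :=
  (∃ (i : Fin n) (c : F), c ≠ 0 ∧ E = 1 + (c - 1) • Matrix.single i i 1) ∨
  (∃ (i j : Fin n) (c : F), i ≠ j ∧ c ≠ 0 ∧ E = 1 + c • Matrix.single i j 1)

namespace ElementaryAux

set_option linter.unusedSectionVars false

open Matrix Sum

variable {F : Type*} [Field F]

def IsElem {m : Type*} [Fintype m] [DecidableEq m] (E : Matrix m m F) : Prop :=
  (∃ (i : m) (c : F), c ≠ 0 ∧ E = 1 + (c - 1) • Matrix.single i i 1) ∨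
  (∃ (i j : m) (c : F), i ≠ j ∧ c ≠ 0 ∧ E = 1 + c • Matrix.single i j 1)

section general
variable {m m' : Type*} [Fintype m] [DecidableEq m] [Fintype m'] [DecidableEq m']

lemma isElem_scale (i : m) {c : F} (hc : c ≠ 0) :
    IsElem (1 + (c - 1) • Matrix.single i i (1:F)) :=
  Or.inl ⟨i, c, hc, rfl⟩

lemma isElem_transvection {i j : m} (h : i ≠ j) (c : F) :
    IsElem (Matrix.transvection i j c) := by
  rcases eq_or_ne c 0 with rfl | hc
  · rw [Matrix.transvection_zero]
    rcases isEmpty_or_nonempty m with hm | ⟨⟨a⟩⟩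
    · exact absurd h (by exact fun _ => (IsEmpty.false i))
    exact Or.inl ⟨a, 1, one_ne_zero, by simp⟩
  · refine Or.inr ⟨i, j, c, h, hc, ?_⟩
    rw [Matrix.transvection, Matrix.smul_single, smul_eq_mul, mul_one]

lemma aux_mul_smul (P : Matrix m m F) (a b : F) :
    (1 + a • P) * (1 + b • P) = 1 + (a + b) • P + (a * b) • (P * P) := by
  simp only [Matrix.mul_add, Matrix.add_mul, one_mul, mul_one, Matrix.smul_mul,
    Matrix.mul_smul, smul_smul, smul_add, add_smul, mul_comm b a]
  abel

lemma isElem_inv {E : Matrix m m F} (hE : IsElem E) :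
    ∃ E', IsElem E' ∧ E * E' = 1 ∧ E' * E = 1 := by
  rcases hE with ⟨i, c, hc, rfl⟩ | ⟨i, j, c, hij, hc, rfl⟩
  · refine ⟨1 + (c⁻¹ - 1) • Matrix.single i i 1, isElem_scale i (inv_ne_zero hc), ?_, ?_⟩ <;>
    · rw [aux_mul_smul, Matrix.single_mul_single_same, mul_one]
      have h1 : ((c - 1) + (c⁻¹ - 1)) + (c - 1) * (c⁻¹ - 1) = 0 := by
        field_simp; ring
      have h2 : ((c⁻¹ - 1) + (c - 1)) + (c⁻¹ - 1) * (c - 1) = 0 := by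
        field_simp; ring
      rw [add_assoc, ← add_smul]
      first
      | (rw [h1]; simp)
      | (rw [h2]; simp)
  · refine ⟨1 + (-c) • Matrix.single i j 1,
      Or.inr ⟨i, j, -c, hij, neg_ne_zero.2 hc, rfl⟩, ?_, ?_⟩ <;>
    · rw [aux_mul_smul]
      simp [Ne.symm hij]

lemma isElem_isUnit {E : Matrix m m F} (hE : IsElem E) : IsUnit E := by
  obtain ⟨E', _, h1, h2⟩ := isElem_inv hE
  exact ⟨⟨E, E', h1, h2⟩, rfl⟩

lemma list_inv {L : List (Matrix m m F)} (hL : ∀ E ∈ L, IsElem E) :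
    ∃ L' : List (Matrix m m F), (∀ E ∈ L', IsElem E) ∧ L'.length = L.length ∧
      L.prod * L'.prod = 1 ∧ L'.prod * L.prod = 1 := by
  induction L with
  | nil => exact ⟨[], by simp, rfl, by simp, by simp⟩
  | cons E t ih =>
    obtain ⟨t', ht'elem, ht'len, h1, h2⟩ := ih (fun x hx => hL x (List.mem_cons_of_mem _ hx))
    obtain ⟨E', hE'elem, hE1, hE2⟩ := isElem_inv (hL E (List.mem_cons_self))
    refine ⟨t' ++ [E'], ?_, by simp [ht'len], ?_, ?_⟩
    · intro x hx
      rcases List.mem_append.1 hx with hx | hx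
      · exact ht'elem x hx
      · simpa using (List.mem_singleton.1 hx) ▸ hE'elem
    · rw [List.prod_cons, List.prod_append, List.prod_singleton, mul_assoc,
        ← mul_assoc t.prod, h1, one_mul, hE1]
    · rw [List.prod_cons, List.prod_append, List.prod_singleton, mul_assoc,
        ← mul_assoc E', hE2, one_mul, h2]

lemma list_prod_isUnit {L : List (Matrix m m F)} (hL : ∀ E ∈ L, IsElem E) :
    IsUnit L.prod := by
  obtain ⟨L', _, _, h1, h2⟩ := list_inv hL
  exact ⟨⟨L.prod, L'.prod, h1, h2⟩, rfl⟩

lemma reindex_one_add_smul (e : m ≃ m') (i j : m) (c : F) :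
    Matrix.reindex e e (1 + c • Matrix.single i j (1:F)) =
      1 + c • Matrix.single (e i) (e j) 1 := by
  ext a b
  simp [Matrix.single, Matrix.one_apply, Equiv.eq_symm_apply]

lemma isElem_reindex (e : m ≃ m') {E : Matrix m m F} (hE : IsElem E) :
    IsElem (Matrix.reindex e e E) := by
  rcases hE with ⟨i, c, hc, rfl⟩ | ⟨i, j, c, hij, hc, rfl⟩
  · exact Or.inl ⟨e i, c, hc, reindex_one_add_smul e i i (c - 1)⟩
  · exact Or.inr ⟨e i, e j, c, fun h => hij (e.injective h), hc,
      reindex_one_add_smul e i j c⟩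

lemma mul_scale_apply (N : Matrix m m F) (r : m) (c : F) (a b : m) :
    (HMul.hMul (α := Matrix m m F) N (1 + (c - 1) • Matrix.single r r 1)) a b =
      if b = r then N a r * c else N a b := by
  rw [Matrix.mul_add, Matrix.mul_one, Matrix.mul_smul, Matrix.add_apply, Matrix.smul_apply]
  by_cases hb : b = r
  · subst hb
    rw [Matrix.mul_single_apply_same]
    simp only [mul_one, if_true, smul_eq_mul]
    ring
  · simp [hb]

end general

/-- Lifting a `k × k` matrix to a `(k ⊕ 1) × (k ⊕ 1)` matrix as a block matrix. -/
def liftHom (k : ℕ) : Matrix (Fin k) (Fin k) F →* Matrix (Fin k ⊕ Unit) (Fin k ⊕ Unit) F where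
  toFun X := Matrix.fromBlocks X 0 0 1
  map_one' := Matrix.fromBlocks_one
  map_mul' X Y := by simp [Matrix.fromBlocks_multiply]

lemma isElem_liftHom (k : ℕ) {E : Matrix (Fin k) (Fin k) F} (hE : IsElem E) :
    IsElem (liftHom k E) := by
  have key : ∀ (i j : Fin k) (c : F),
      liftHom k (1 + c • Matrix.single i j (1:F)) =
        1 + c • Matrix.single (inl i : Fin k ⊕ Unit) (inl j) 1 := by
    intro i j c
    show Matrix.fromBlocks _ _ _ _ = _
    ext a b
    rcases a with a | a <;> rcases b with b | b <;>
      simp [Matrix.single, Matrix.one_apply]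
  rcases hE with ⟨i, c, hc, rfl⟩ | ⟨i, j, c, hij, hc, rfl⟩
  · exact Or.inl ⟨inl i, c, hc, key i i (c - 1)⟩
  · exact Or.inr ⟨inl i, inl j, c, by simpa using hij, hc, key i j c⟩

theorem key_lemma : ∀ (n : ℕ) (A : Matrix (Fin n) (Fin n) F), IsUnit A →
    ∃ L R : List (Matrix (Fin n) (Fin n) F), (∀ E ∈ L, IsElem E) ∧ (∀ E ∈ R, IsElem E) ∧
      L.prod * A * R.prod = 1 ∧ L.length + R.length ≤ n ^ 2 + 4 * (n - 1) := by
  intro n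
  induction n with
  | zero =>
    intro A _
    refine ⟨[], [], by simp, by simp, ?_, by simp⟩
    simp only [List.prod_nil, one_mul, mul_one]
    ext i j
    exact i.elim0
  | succ n ih =>
    intro A hA
    set e : Fin (n + 1) ≃ Fin n ⊕ Unit :=
      finSuccEquivLast.trans (Equiv.optionEquivSumPUnit _) with he
    set M : Matrix (Fin n ⊕ Unit) (Fin n ⊕ Unit) F := Matrix.reindex e e A with hMdef
    have hM : IsUnit M := by
      have : M = Matrix.reindexAlgEquiv F F e A := rfl
      rw [this]
      exact hA.map (Matrix.reindexAlgEquiv F F e)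
    -- the last column of M is nonzero somewhere
    have hcol : ∃ i, M i (inr ()) ≠ 0 := by
      by_contra h
      push_neg at h
      have h1 := hM.unit.inv_mul
      rw [IsUnit.unit_spec] at h1
      have h2 := congrFun (congrFun h1 (inr ())) (inr ())
      rw [Matrix.mul_apply] at h2
      simp [h, Matrix.one_apply] at h2
    -- step 0 : make the pivot entry nonzero
    obtain ⟨L₀, hL₀elem, hL₀len, hL₀case, hp⟩ :
        ∃ L₀ : List (Matrix (Fin n ⊕ Unit) (Fin n ⊕ Unit) F),
          (∀ E ∈ L₀, IsElem E) ∧ L₀.length ≤ 1 ∧ (L₀.length = 0 ∨ 1 ≤ n) ∧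
          (L₀.prod * M) (inr ()) (inr ()) ≠ 0 := by
      by_cases h0 : M (inr ()) (inr ()) ≠ 0
      · exact ⟨[], by simp, by simp, Or.inl rfl, by simpa using h0⟩
      · push_neg at h0
        obtain ⟨i, hi⟩ := hcol
        obtain ⟨i₀, rfl⟩ : ∃ i₀ : Fin n, i = inl i₀ := by
          rcases i with i₀ | ⟨⟩
          · exact ⟨i₀, rfl⟩
          · exact absurd h0 hi
        refine ⟨[Matrix.transvection (inr ()) (inl i₀) 1],
          by simpa using isElem_transvection (by simp) 1, by simp,
          Or.inr i₀.pos, ?_⟩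
        rw [List.prod_singleton, Matrix.transvection_mul_apply_same, h0, one_mul, zero_add]
        exact hi
    set M₁ : Matrix (Fin n ⊕ Unit) (Fin n ⊕ Unit) F := L₀.prod * M with hM₁def
    set Lc := Matrix.Pivot.listTransvecCol M₁ with hLcdef
    set Rr := Matrix.Pivot.listTransvecRow M₁ with hRrdef
    set N : Matrix (Fin n ⊕ Unit) (Fin n ⊕ Unit) F := Lc.prod * M₁ * Rr.prod with hNdef
    have hLcelem : ∀ E ∈ Lc, IsElem E := by
      intro E hE
      rw [hLcdef, Matrix.Pivot.listTransvecCol, List.mem_ofFn] at hE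
      obtain ⟨i, rfl⟩ := hE
      exact isElem_transvection (by simp) _
    have hRrelem : ∀ E ∈ Rr, IsElem E := by
      intro E hE
      rw [hRrdef, Matrix.Pivot.listTransvecRow, List.mem_ofFn] at hE
      obtain ⟨i, rfl⟩ := hE
      exact isElem_transvection (by simp) _
    have hLclen : Lc.length = n := Matrix.Pivot.length_listTransvecCol M₁
    have hRrlen : Rr.length = n := Matrix.Pivot.length_listTransvecRow M₁
    have hN1 : ∀ i, N (inl i) (inr ()) = 0 :=
      Matrix.Pivot.listTransvecCol_mul_mul_listTransvecRow_last_row M₁ hp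
    have hN2 : ∀ i, N (inr ()) (inl i) = 0 :=
      Matrix.Pivot.listTransvecCol_mul_mul_listTransvecRow_last_col M₁ hp
    have hN3 : N (inr ()) (inr ()) = M₁ (inr ()) (inr ()) := by
      have hRr_eq : Rr = Matrix.Pivot.listTransvecRow (Lc.prod * M₁) := by
        simp [hRrdef, hLcdef, Matrix.Pivot.listTransvecRow,
          Matrix.Pivot.listTransvecCol_mul_last_row]
      rw [hNdef, hRr_eq, Matrix.Pivot.mul_listTransvecRow_last_col,
        Matrix.Pivot.listTransvecCol_mul_last_row]
    -- step: scale the pivot to 1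
    set p : F := M₁ (inr ()) (inr ()) with hpdef
    set D : Matrix (Fin n ⊕ Unit) (Fin n ⊕ Unit) F :=
      1 + (p⁻¹ - 1) • Matrix.single (inr ()) (inr ()) 1 with hDdef
    have hDelem : IsElem D := isElem_scale _ (inv_ne_zero hp)
    set N₂ : Matrix (Fin n ⊕ Unit) (Fin n ⊕ Unit) F := N * D with hN₂def
    have hN₂ : ∀ a b, N₂ a b = if b = inr () then N a (inr ()) * p⁻¹ else N a b :=
      fun a b => mul_scale_apply N (inr ()) p⁻¹ a b
    set B : Matrix (Fin n) (Fin n) F := Matrix.of (fun i j => N₂ (inl i) (inl j)) with hBdef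
    have hblock : N₂ = Matrix.fromBlocks B 0 0 1 := by
      ext a b
      rcases a with a | a <;> rcases b with b | b
      · simp [hBdef]
      · simp [hN₂ (inl a) (inr b), hN1 a]
      · simp [hN₂ (inr a) (inl b), hN2 b]
      · simp [hN₂ (inr a) (inr b), hN3, Matrix.one_apply, mul_inv_cancel₀ hp]
    have hN₂unit : IsUnit N₂ := by
      rw [hN₂def, hNdef, hM₁def]
      exact (((list_prod_isUnit hLcelem).mul ((list_prod_isUnit hL₀elem).mul hM)).mul
        (list_prod_isUnit hRrelem)).mul (isElem_isUnit hDelem)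
    have hBunit : IsUnit B := by
      have hdet := hN₂unit
      rw [Matrix.isUnit_iff_isUnit_det] at hdet ⊢
      rw [hblock, Matrix.det_fromBlocks_zero₂₁] at hdet
      simpa using hdet
    obtain ⟨Lb, Rb, hLbelem, hRbelem, hBprod, hBlen⟩ := ih B hBunit
    set lift := liftHom (F := F) n with hliftdef
    set L' : List (Matrix (Fin n ⊕ Unit) (Fin n ⊕ Unit) F) :=
      (Lb.map lift) ++ Lc ++ L₀ with hL'def
    set R' : List (Matrix (Fin n ⊕ Unit) (Fin n ⊕ Unit) F) :=
      Rr ++ [D] ++ (Rb.map lift) with hR'def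
    have hL'elem : ∀ E ∈ L', IsElem E := by
      intro E hE
      simp only [hL'def, List.mem_append, List.mem_map] at hE
      rcases hE with (⟨x, hx, rfl⟩ | hE) | hE
      · exact isElem_liftHom n (hLbelem x hx)
      · exact hLcelem E hE
      · exact hL₀elem E hE
    have hR'elem : ∀ E ∈ R', IsElem E := by
      intro E hE
      simp only [hR'def, List.mem_append, List.mem_map, List.mem_singleton] at hE
      rcases hE with (hE | rfl) | ⟨x, hx, rfl⟩
      · exact hRrelem E hE
      · exact hDelem
      · exact isElem_liftHom n (hRbelem x hx)
    have h1 : (Lb.map lift).prod = Matrix.fromBlocks Lb.prod 0 0 1 := by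
      rw [← map_list_prod lift Lb]; rfl
    have h2 : (Rb.map lift).prod = Matrix.fromBlocks Rb.prod 0 0 1 := by
      rw [← map_list_prod lift Rb]; rfl
    have hprod' : L'.prod * M * R'.prod = 1 := by
      have step1 : L'.prod * M * R'.prod = (Lb.map lift).prod * N₂ * (Rb.map lift).prod := by
        rw [hL'def, hR'def]
        simp only [List.prod_append, List.prod_singleton]
        rw [hN₂def, hNdef, hM₁def]
        simp only [mul_assoc]
      rw [step1, h1, h2, hblock]
      rw [show (Matrix.fromBlocks Lb.prod (0 : Matrix (Fin n) Unit F) 0 1 : Matrix (Fin n ⊕ Unit) (Fin n ⊕ Unit) F) *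
          Matrix.fromBlocks B 0 0 1 * Matrix.fromBlocks Rb.prod 0 0 1 =
          Matrix.fromBlocks (Lb.prod * B * Rb.prod) 0 0 1 by
        simp [Matrix.fromBlocks_multiply]]
      rw [hBprod, Matrix.fromBlocks_one]
    -- transfer back to `Fin (n+1)`
    set φ := Matrix.reindexAlgEquiv F F e.symm with hφdef
    have hmap : ∀ (l : List (Matrix (Fin n ⊕ Unit) (Fin n ⊕ Unit) F)),
        (l.map (Matrix.reindex e.symm e.symm)).prod = φ l.prod := by
      intro l
      rw [show ⇑(Matrix.reindex (α := F) e.symm e.symm) = ⇑φ from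
        funext fun X => (Matrix.reindexAlgEquiv_apply F F e.symm X).symm]
      exact (map_list_prod φ l).symm
    have hφA : φ M = A := by
      rw [hMdef]
      simp [hφdef, Matrix.reindexAlgEquiv_apply]
    refine ⟨L'.map (Matrix.reindex e.symm e.symm), R'.map (Matrix.reindex e.symm e.symm),
      ?_, ?_, ?_, ?_⟩
    · intro E hE
      obtain ⟨x, hx, rfl⟩ := List.mem_map.1 hE
      exact isElem_reindex _ (hL'elem x hx)
    · intro E hE
      obtain ⟨x, hx, rfl⟩ := List.mem_map.1 hE
      exact isElem_reindex _ (hR'elem x hx)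
    · rw [hmap, hmap, ← hφA, ← _root_.map_mul φ, ← _root_.map_mul φ, hprod', _root_.map_one φ]
    · simp only [List.length_map, hL'def, hR'def, List.length_append, List.length_singleton,
        hLclen, hRrlen]
      have hsq : (n + 1) ^ 2 = n ^ 2 + 2 * n + 1 := by ring
      rw [hsq]
      generalize n ^ 2 = q at hBlen ⊢
      omega

theorem stmt_12' {n : ℕ} (A : Matrix (Fin n) (Fin n) F) (hA : IsUnit A) :
    ∃ L : List (Matrix (Fin n) (Fin n) F),
      (∀ E ∈ L, IsElem E) ∧ L.prod = A ∧ L.length ≤ n ^ 2 + 4 * (n - 1) := by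
  obtain ⟨L, R, hL, hR, hprod, hlen⟩ := key_lemma n A hA
  obtain ⟨L', hL'e, hL'len, hLL', hL'L⟩ := list_inv hL
  obtain ⟨R', hR'e, hR'len, hRR', hR'R⟩ := list_inv hR
  refine ⟨L' ++ R', ?_, ?_, ?_⟩
  · intro E hE
    rcases List.mem_append.1 hE with h | h
    · exact hL'e E h
    · exact hR'e E h
  · rw [List.prod_append]
    calc L'.prod * R'.prod = L'.prod * (L.prod * A * R.prod) * R'.prod := by
          rw [hprod, mul_one]
      _ = L'.prod * L.prod * A * (R.prod * R'.prod) := by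
          simp only [mul_assoc]
      _ = A := by rw [hL'L, hRR', one_mul, mul_one]
  · rw [List.length_append, hL'len, hR'len]
    exact hlen


end ElementaryAux

/-- Every invertible `n × n` matrix over a field is a product of at most `n² + 4(n-1)`
elementary matrices. -/
theorem stmt_12 {n : ℕ} {F : Type*} [Field F]
    (A : Matrix (Fin n) (Fin n) F) (hA : IsUnit A) :
    ∃ L : List (Matrix (Fin n) (Fin n) F),
      (∀ E ∈ L, IsElementary E) ∧ L.prod = A ∧ L.length ≤ n ^ 2 + 4 * (n - 1) := by
  obtain ⟨L, hLelem, hLprod, hLlen⟩ := ElementaryAux.stmt_12' A hA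
  exact ⟨L, fun E hE => hLelem E hE, hLprod, hLlen⟩
end
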